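/- arXiv:2502.03988 — 5 statements merged into one kernel-verified Lean document; each statement's English description precedes it below -/
import Mathlib

section
/- Let (Ω, Σ, P) be a probability space, let k be a positive integer, let f : (a,b) → ℝ be a 2k-times differentiable function with f^(2k)(x) ≥ 0 for every x ∈ (a,b), and let X : Ω → (a,b) be an integrable random variable such that f(X) and f^(i)(X)·(X − E[X])^i are integrable for 1 ≤ i ≤ 2k−1. Then E[f(X)] − f(E[X]) ≤ −∑_{i=1}^{2k−1} ((−1)^i / i!) · E[f^(i)(X)·(X − E[X])^i]. -/
/-!
Put `c = E[X]`. As a function of the centre `x`, the Taylor sum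
`T(x) = ∑_{i<2k} f⁽ⁱ⁾(x) (c - x)ⁱ / i!` has the telescoping derivative
`f⁽²ᵏ⁾(x) (c - x)²ᵏ⁻¹ / (2k-1)!`, which is `≥ 0` left of `c` and `≤ 0` right of `c` because
`2k - 1` is odd. Hence `T` is maximal at `c`, where it equals `f(c)`; the inequality
`T(X) ≤ f(E[X])` integrates to the claim.
-/

open MeasureTheory ProbabilityTheory Finset
open scoped Nat

noncomputable def taylorSum (fd : ℕ → ℝ → ℝ) (n : ℕ) (c x : ℝ) : ℝ :=
  ∑ i ∈ range n, fd i x * (c - x) ^ i / i !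

lemma taylorSum_self (fd : ℕ → ℝ → ℝ) (n : ℕ) (c : ℝ) : taylorSum fd (n + 1) c c = fd 0 c := by
  simp [taylorSum, sum_range_succ']

lemma taylorSum_eq_add_sum_Icc (fd : ℕ → ℝ → ℝ) (n : ℕ) (c x : ℝ) :
    taylorSum fd (n + 1) c x =
      fd 0 x + ∑ i ∈ Icc 1 n, (-1 : ℝ) ^ i / i ! * (fd i x * (x - c) ^ i) := by
  have hIcc : Icc 1 n = Ico 1 (n + 1) := rfl
  rw [taylorSum, sum_range_succ', hIcc, sum_Ico_eq_sum_range, add_comm]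
  congr 1
  · simp
  · refine sum_congr (by simp) fun i _ => ?_
    rw [show c - x = -1 * (x - c) by ring, mul_pow, add_comm 1 i]
    ring

lemma hasDerivAt_taylorSum (fd : ℕ → ℝ → ℝ) (n : ℕ) (c y : ℝ)
    (hderiv : ∀ i ≤ n, HasDerivAt (fd i) (fd (i + 1) y) y) :
    HasDerivAt (taylorSum fd (n + 1) c) (fd (n + 1) y * (c - y) ^ n / n !) y := by
  induction n with
  | zero =>
    have hf : taylorSum fd 1 c = fd 0 := funext fun z => by simp [taylorSum]
    simpa [hf] using hderiv 0 le_rfl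
  | succ n ih =>
    have hlast : HasDerivAt (fun z => fd (n + 1) z * (c - z) ^ (n + 1) / (n + 1)!)
        ((fd (n + 2) y * (c - y) ^ (n + 1)
          + fd (n + 1) y * ((n + 1 : ℕ) * (c - y) ^ n * (-1))) / (n + 1)!) y :=
      ((hderiv (n + 1) le_rfl).mul (((hasDerivAt_id y).const_sub c).pow (n + 1))).div_const _
    have hsum := (ih fun i hi => hderiv i (hi.trans n.le_succ)).add hlast
    have hsplit : taylorSum fd (n + 2) c =
        taylorSum fd (n + 1) c + fun z => fd (n + 1) z * (c - z) ^ (n + 1) / (n + 1)! :=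
      funext fun z => sum_range_succ _ (n + 1)
    rw [hsplit]
    refine hsum.congr_deriv ?_
    rw [Nat.factorial_succ]
    push_cast
    field_simp
    ring

lemma isMaxOn_of_hasDerivAt_of_nonneg_of_nonpos {s : Set ℝ} (hs : s.OrdConnected)
    {g g' : ℝ → ℝ} {c : ℝ} (hg : ∀ y ∈ s, HasDerivAt g (g' y) y)
    (hleft : ∀ y ∈ s, y < c → 0 ≤ g' y) (hright : ∀ y ∈ s, c < y → g' y ≤ 0) (hc : c ∈ s) :
    IsMaxOn g s c := by
  intro x hx
  have hcont : ∀ t ⊆ s, ContinuousOn g t := fun t ht y hy =>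
    (hg y (ht hy)).continuousAt.continuousWithinAt
  have hderiv : ∀ t ⊆ s, ∀ y ∈ interior t, HasDerivWithinAt g (g' y) (interior t) y :=
    fun t ht y hy => (hg y (ht (interior_subset hy))).hasDerivWithinAt
  rcases le_total x c with hxc | hcx
  · have hsub := hs.out hx hc
    refine monotoneOn_of_hasDerivWithinAt_nonneg (convex_Icc x c) (hcont _ hsub)
      (hderiv _ hsub) (fun y hy => ?_) ⟨le_rfl, hxc⟩ ⟨hxc, le_rfl⟩ hxc
    rw [interior_Icc] at hy
    exact hleft y (hsub (Set.Ioo_subset_Icc_self hy)) hy.2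
  · have hsub := hs.out hc hx
    refine antitoneOn_of_hasDerivWithinAt_nonpos (convex_Icc c x) (hcont _ hsub)
      (hderiv _ hsub) (fun y hy => ?_) ⟨le_rfl, hcx⟩ ⟨hcx, le_rfl⟩ hcx
    rw [interior_Icc] at hy
    exact hright y (hsub (Set.Ioo_subset_Icc_self hy)) hy.1

lemma isMaxOn_taylorSum {s : Set ℝ} (hs : s.OrdConnected) (fd : ℕ → ℝ → ℝ) {n : ℕ}
    (hn : Odd n) (hderiv : ∀ i ≤ n, ∀ y ∈ s, HasDerivAt (fd i) (fd (i + 1) y) y)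
    (hnonneg : ∀ y ∈ s, 0 ≤ fd (n + 1) y) {c : ℝ} (hc : c ∈ s) :
    IsMaxOn (taylorSum fd (n + 1) c) s c := by
  refine isMaxOn_of_hasDerivAt_of_nonneg_of_nonpos hs
    (fun y hy => hasDerivAt_taylorSum fd n c y fun i hi => hderiv i hi y hy)
    (fun y hy hyc => ?_) (fun y hy hcy => ?_) hc
  · exact div_nonneg (mul_nonneg (hnonneg y hy) (pow_nonneg (sub_nonneg.2 hyc.le) n))
      (by positivity)
  · exact div_nonpos_of_nonpos_of_nonneg
      (mul_nonpos_of_nonneg_of_nonpos (hnonneg y hy) (hn.pow_nonpos (by linarith)))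
      (by positivity)

lemma apply_le_sub_sum_taylor_of_odd {s : Set ℝ} (hs : s.OrdConnected) (fd : ℕ → ℝ → ℝ) {n : ℕ}
    (hn : Odd n) (hderiv : ∀ i ≤ n, ∀ y ∈ s, HasDerivAt (fd i) (fd (i + 1) y) y)
    (hnonneg : ∀ y ∈ s, 0 ≤ fd (n + 1) y) {c x : ℝ} (hc : c ∈ s) (hx : x ∈ s) :
    fd 0 x ≤ fd 0 c - ∑ i ∈ Icc 1 n, (-1 : ℝ) ^ i / i ! * (fd i x * (x - c) ^ i) := by
  have := isMaxOn_taylorSum hs fd hn hderiv hnonneg hc hx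
  rw [Set.mem_ofPred_eq, taylorSum_self, taylorSum_eq_add_sum_Icc] at this
  linarith

lemma lt_integral_of_forall_lt {Ω : Type*} [MeasurableSpace Ω] {P : Measure Ω}
    [IsProbabilityMeasure P] {X : Ω → ℝ} (hX : Integrable X P) {c : ℝ} (h : ∀ ω, c < X ω) :
    c < ∫ ω, X ω ∂P := by
  have hpos : 0 < ∫ ω, (X ω - c) ∂P := by
    rw [integral_pos_iff_support_of_nonneg (fun ω => sub_nonneg.2 (h ω).le)
      (hX.sub (integrable_const c))]
    simp [Function.support, sub_eq_zero, (h _).ne']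
  rw [integral_sub hX (integrable_const c)] at hpos
  simpa using hpos

namespace EReal

lemma lt_integral_of_forall_lt {Ω : Type*} [MeasurableSpace Ω] {P : Measure Ω}
    [IsProbabilityMeasure P] {X : Ω → ℝ} (hX : Integrable X P) {a : EReal}
    (h : ∀ ω, a < X ω) : a < ((∫ ω, X ω ∂P : ℝ) : EReal) := by
  induction a using EReal.rec with
  | bot => exact bot_lt_coe _
  | coe c => exact_mod_cast _root_.lt_integral_of_forall_lt hX fun ω => by exact_mod_cast h ω
  | top =>
    obtain ⟨ω⟩ := nonempty_of_isProbabilityMeasure P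
    exact absurd (h ω) not_top_lt

lemma integral_lt_of_forall_lt {Ω : Type*} [MeasurableSpace Ω] {P : Measure Ω}
    [IsProbabilityMeasure P] {X : Ω → ℝ} (hX : Integrable X P) {b : EReal}
    (h : ∀ ω, (X ω : EReal) < b) : ((∫ ω, X ω ∂P : ℝ) : EReal) < b := by
  have := lt_integral_of_forall_lt (X := fun ω => -X ω) hX.neg (a := -b) fun ω => by
    rw [coe_neg, neg_lt_neg_iff]; exact h ω
  rwa [integral_neg, coe_neg, neg_lt_neg_iff] at this

end EReal

lemma integral_const_sub_sum_mul {Ω : Type*} [MeasurableSpace Ω] {P : Measure Ω}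
    [IsProbabilityMeasure P] {ι : Type*} (t : Finset ι) (c : ℝ) (w : ι → ℝ) {Y : ι → Ω → ℝ}
    (hY : ∀ i ∈ t, Integrable (Y i) P) :
    ∫ ω, (c - ∑ i ∈ t, w i * Y i ω) ∂P = c - ∑ i ∈ t, w i * ∫ ω, Y i ω ∂P := by
  have hint : ∀ i ∈ t, Integrable (fun ω => w i * Y i ω) P := fun i hi => (hY i hi).const_mul _
  rw [integral_sub (integrable_const c) (integrable_finsetSum t hint), integral_const,
    integral_finsetSum t hint]
  simp [integral_const_mul]

theorem jensen_gap_higher_order_upper_general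
    {Ω : Type*} [MeasurableSpace Ω] (P : Measure Ω) [IsProbabilityMeasure P]
    (a b : EReal) (k : ℕ) (hk : 0 < k)
    (f : ℝ → ℝ) (fd : ℕ → ℝ → ℝ) (hfd0 : fd 0 = f)
    (hderiv : ∀ i < 2 * k, ∀ x : ℝ, a < (x : EReal) → (x : EReal) < b →
      HasDerivAt (fd i) (fd (i + 1) x) x)
    (hnonneg : ∀ x : ℝ, a < (x : EReal) → (x : EReal) < b → 0 ≤ fd (2 * k) x)
    (X : Ω → ℝ)
    (hX : ∀ ω, a < (X ω : EReal) ∧ (X ω : EReal) < b)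
    (hXint : Integrable X P)
    (hfXint : Integrable (fun ω => f (X ω)) P)
    (hmom : ∀ i ∈ Finset.Icc 1 (2 * k - 1),
      Integrable (fun ω => fd i (X ω) * (X ω - ∫ ω', X ω' ∂P) ^ i) P) :
    (∫ ω, f (X ω) ∂P) - f (∫ ω, X ω ∂P)
      ≤ -∑ i ∈ Finset.Icc 1 (2 * k - 1),
          ((-1 : ℝ) ^ i / (Nat.factorial i : ℝ)) *
            (∫ ω, fd i (X ω) * (X ω - ∫ ω', X ω' ∂P) ^ i ∂P) := by
  subst hfd0
  set μ := ∫ ω, X ω ∂P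
  set s : Set ℝ := (↑) ⁻¹' Set.Ioo a b
  have hs : s.OrdConnected := Set.ordConnected_Ioo.preimage_mono EReal.coe_strictMono.monotone
  have hμ : μ ∈ s :=
    ⟨EReal.lt_integral_of_forall_lt hXint fun ω => (hX ω).1,
      EReal.integral_lt_of_forall_lt hXint fun ω => (hX ω).2⟩
  have htwo : 2 * k - 1 + 1 = 2 * k := by omega
  have hpointwise := fun ω =>
    apply_le_sub_sum_taylor_of_odd hs fd (n := 2 * k - 1) ⟨k - 1, by omega⟩
      (fun i hi y hy => hderiv i (by omega) y hy.1 hy.2)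
      (fun y hy => htwo ▸ hnonneg y hy.1 hy.2) hμ (hX ω)
  have hbound := integral_mono (g := fun ω => fd 0 μ - ∑ i ∈ Icc 1 (2 * k - 1),
      (-1 : ℝ) ^ i / i ! * (fd i (X ω) * (X ω - μ) ^ i)) hfXint
    ((integrable_const _).sub (integrable_finsetSum _ fun i hi => (hmom i hi).const_mul _))
    hpointwise
  rw [integral_const_sub_sum_mul _ _ _ hmom] at hbound
  linarith

/-- Let `k ≥ 1`, let `f : (a,b) → ℝ` be a `2k`-times differentiable function
(with `i`-th derivative `fd i`, `fd 0 = f`) such that `f^{(2k)}(x) ≥ 0` on `(a,b)`, and let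
`X : Ω → (a,b)` be an integrable random variable such that `f(X)` and
`f^{(i)}(X)·(X − E[X])^i` (`1 ≤ i ≤ 2k−1`) are integrable. Then
`E[f(X)] − f(E[X]) ≤ −∑_{i=1}^{2k−1} ((−1)^i/i!)·E[f^{(i)}(X)·(X − E[X])^i]`. -/
theorem jensen_gap_higher_order_upper
    {Ω : Type*} [MeasurableSpace Ω] (P : Measure Ω) [IsProbabilityMeasure P]
    (a b : EReal) (hab : a < b) (k : ℕ) (hk : 0 < k)
    (f : ℝ → ℝ) (fd : ℕ → ℝ → ℝ) (hfd0 : fd 0 = f)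
    (hderiv : ∀ i < 2 * k, ∀ x : ℝ, a < (x : EReal) → (x : EReal) < b →
      HasDerivAt (fd i) (fd (i + 1) x) x)
    (hnonneg : ∀ x : ℝ, a < (x : EReal) → (x : EReal) < b → 0 ≤ fd (2 * k) x)
    (X : Ω → ℝ)
    (hX : ∀ ω, a < (X ω : EReal) ∧ (X ω : EReal) < b)
    (hXint : Integrable X P)
    (hfXint : Integrable (fun ω => f (X ω)) P)
    (hmom : ∀ i ∈ Finset.Icc 1 (2 * k - 1),
      Integrable (fun ω => fd i (X ω) * (X ω - ∫ ω', X ω' ∂P) ^ i) P) :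
    (∫ ω, f (X ω) ∂P) - f (∫ ω, X ω ∂P)
      ≤ -∑ i ∈ Finset.Icc 1 (2 * k - 1),
          ((-1 : ℝ) ^ i / (Nat.factorial i : ℝ)) *
            (∫ ω, fd i (X ω) * (X ω - ∫ ω', X ω' ∂P) ^ i ∂P) :=
  jensen_gap_higher_order_upper_general P a b k hk f fd hfd0 hderiv hnonneg X hX hXint hfXint hmom
end

section
/- Let (Ω, Σ, P) be a probability space, let f : (0,∞) → ℝ be a four times differentiable function with f'''(x) ≥ 0 and f''''(x) ≥ 0 for every x > 0, and let X : Ω → (0,∞) be an integrable random variable with right-skewed distribution, i.e., E[(X − E[X])^3] ≥ 0, such that f(X), (X − E[X])^2, and (X − E[X])^3 are integrable. Then E[f(X)] − f(E[X]) ≥ (1/2)·f''(E[X])·Var(X). -/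
/-!
Since `f'''' ≥ 0`, `f` dominates its third-order Taylor polynomial at `μ = E[X]` on `(0, ∞)`.
Taking expectations, the linear term vanishes and the cubic term `f'''(μ)/6 · E[(X - μ)^3]` is
nonnegative because `f'''(μ) ≥ 0` and `X` is right-skewed.
-/

open MeasureTheory ProbabilityTheory Set

section Calculus

variable {a : ℝ} {g g' : ℝ → ℝ}

lemma monotoneOn_Ioi_of_hasDerivAt_nonneg (hg : ∀ x ∈ Ioi a, HasDerivAt g (g' x) x)
    (hg' : ∀ x ∈ Ioi a, 0 ≤ g' x) : MonotoneOn g (Ioi a) :=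
  monotoneOn_of_hasDerivWithinAt_nonneg (convex_Ioi a)
    (fun x hx => (hg x hx).continuousAt.continuousWithinAt)
    (fun x hx => (hg x (interior_subset hx)).hasDerivWithinAt)
    (fun x hx => hg' x (interior_subset hx))

lemma convexOn_Ioi_of_hasDerivAt_of_monotoneOn (hg : ∀ x ∈ Ioi a, HasDerivAt g (g' x) x)
    (hg' : MonotoneOn g' (Ioi a)) : ConvexOn ℝ (Ioi a) g := by
  refine MonotoneOn.convexOn_of_deriv (convex_Ioi a)
    (fun x hx => (hg x hx).continuousAt.continuousWithinAt)
    (fun x hx => (hg x (interior_subset hx)).differentiableAt.differentiableWithinAt) ?_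
  rw [interior_Ioi]
  exact hg'.congr fun x hx => ((hg x hx).deriv).symm

lemma ConvexOn.add_mul_sub_le_of_hasDerivAt {S : Set ℝ} {f : ℝ → ℝ} {f' x y : ℝ}
    (hfc : ConvexOn ℝ S f) (hx : x ∈ S) (hy : y ∈ S) (hf : HasDerivAt f f' x) :
    f x + f' * (y - x) ≤ f y := by
  rcases lt_trichotomy x y with hxy | rfl | hyx
  · have := hfc.le_slope_of_hasDerivAt hx hy hxy hf
    rw [slope_def_field, le_div_iff₀ (sub_pos.2 hxy)] at this
    linarith
  · simp
  · have := hfc.slope_le_of_hasDerivAt hy hx hyx hf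
    rw [slope_def_field, div_le_iff₀ (sub_pos.2 hyx)] at this
    linarith

end Calculus

theorem taylor_cubic_le_of_monotoneOn {a c x : ℝ} {f f1 f2 f3 : ℝ → ℝ}
    (hd1 : ∀ x ∈ Ioi a, HasDerivAt f (f1 x) x) (hd2 : ∀ x ∈ Ioi a, HasDerivAt f1 (f2 x) x)
    (hd3 : ∀ x ∈ Ioi a, HasDerivAt f2 (f3 x) x) (hf3 : MonotoneOn f3 (Ioi a))
    (hc : c ∈ Ioi a) (hx : x ∈ Ioi a) :
    f c + f1 c * (x - c) + f2 c / 2 * (x - c) ^ 2 + f3 c / 6 * (x - c) ^ 3 ≤ f x := by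
  -- Each remainder `rᵢ` has `rᵢ₊₁` as derivative: `r2 ≥ 0` by convexity of `f2`, so `r1` is
  -- monotone, so `r0` is convex with `r0 c = r0' c = 0`.
  set r2 : ℝ → ℝ := fun x => f2 x - f2 c - f3 c * (x - c)
  set r1 : ℝ → ℝ := fun x => f1 x - f1 c - f2 c * (x - c) - f3 c / 2 * (x - c) ^ 2
  set r0 : ℝ → ℝ := fun x => f x - f c - f1 c * (x - c) - f2 c / 2 * (x - c) ^ 2
    - f3 c / 6 * (x - c) ^ 3
  have hr2 : ∀ x ∈ Ioi a, 0 ≤ r2 x := fun x hx => by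
    have := (convexOn_Ioi_of_hasDerivAt_of_monotoneOn hd3 hf3).add_mul_sub_le_of_hasDerivAt
      hc hx (hd3 c hc)
    simp only [r2]
    linarith
  have hr1 : ∀ x ∈ Ioi a, HasDerivAt r1 (r2 x) x := fun x hx => by
    have hX := (hasDerivAt_id x).sub_const c
    refine ((((hd2 x hx).sub_const (f1 c)).sub (hX.const_mul (f2 c))).sub
      ((hX.pow 2).const_mul (f3 c / 2))).congr_deriv ?_
    simp only [r2, id]
    ring
  have hr0 : ∀ x ∈ Ioi a, HasDerivAt r0 (r1 x) x := fun x hx => by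
    have hX := (hasDerivAt_id x).sub_const c
    refine (((((hd1 x hx).sub_const (f c)).sub (hX.const_mul (f1 c))).sub
      ((hX.pow 2).const_mul (f2 c / 2))).sub ((hX.pow 3).const_mul (f3 c / 6))).congr_deriv ?_
    simp only [r1, id]
    ring
  have := (convexOn_Ioi_of_hasDerivAt_of_monotoneOn hr0
    (monotoneOn_Ioi_of_hasDerivAt_nonneg hr1 hr2)).add_mul_sub_le_of_hasDerivAt hc hx (hr0 c hc)
  simp only [r0, r1, sub_self] at this
  linarith

section Integral

variable {Ω : Type*} [MeasurableSpace Ω] {P : Measure Ω} {Y : Ω → ℝ}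

lemma integrable_cubic [IsFiniteMeasure P] (h1 : Integrable Y P) (h2 : Integrable (fun ω => Y ω ^ 2) P)
    (h3 : Integrable (fun ω => Y ω ^ 3) P) (c0 c1 c2 c3 : ℝ) :
    Integrable (fun ω => c0 + c1 * Y ω + c2 * Y ω ^ 2 + c3 * Y ω ^ 3) P :=
  (((integrable_const c0).fun_add (h1.const_mul c1)).fun_add (h2.const_mul c2)).fun_add
    (h3.const_mul c3)

lemma integral_cubic [IsProbabilityMeasure P] (h1 : Integrable Y P) (h2 : Integrable (fun ω => Y ω ^ 2) P)
    (h3 : Integrable (fun ω => Y ω ^ 3) P) (c0 c1 c2 c3 : ℝ) :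
    ∫ ω, (c0 + c1 * Y ω + c2 * Y ω ^ 2 + c3 * Y ω ^ 3) ∂P
      = c0 + c1 * ∫ ω, Y ω ∂P + c2 * ∫ ω, Y ω ^ 2 ∂P + c3 * ∫ ω, Y ω ^ 3 ∂P := by
  have h01 := (integrable_const c0).fun_add (h1.const_mul c1)
  rw [integral_add (h01.fun_add (h2.const_mul c2)) (h3.const_mul c3),
    integral_add h01 (h2.const_mul c2), integral_add (integrable_const c0) (h1.const_mul c1),
    integral_const, integral_const_mul, integral_const_mul, integral_const_mul]
  simp

lemma integral_pos_of_forall_pos [NeZero P] (hY : Integrable Y P) (hpos : ∀ ω, 0 < Y ω) :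
    0 < ∫ ω, Y ω ∂P := by
  rw [integral_pos_iff_support_of_nonneg (fun ω => (hpos ω).le) hY,
    Function.support_eq_univ fun ω => (hpos ω).ne']
  simp [NeZero.ne P]

end Integral

/-- Let `f : (0,∞) → ℝ` be four times differentiable (with successive
derivatives `f1, f2, f3, f4`) with `f'''(x) ≥ 0` and `f''''(x) ≥ 0` for every `x > 0`, and let
`X : Ω → (0,∞)` be an integrable random variable with right-skewed distribution, i.e.,
`E[(X − E[X])^3] ≥ 0`, such that `f(X)`, `(X − E[X])^2` and `(X − E[X])^3` are integrable.
Then `E[f(X)] − f(E[X]) ≥ (1/2)·f''(E[X])·Var(X)`. -/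
theorem jensen_gap_superquadratic_lower
    {Ω : Type*} [MeasurableSpace Ω] (P : Measure Ω) [IsProbabilityMeasure P]
    (f f1 f2 f3 f4 : ℝ → ℝ)
    (hd1 : ∀ x : ℝ, 0 < x → HasDerivAt f (f1 x) x)
    (hd2 : ∀ x : ℝ, 0 < x → HasDerivAt f1 (f2 x) x)
    (hd3 : ∀ x : ℝ, 0 < x → HasDerivAt f2 (f3 x) x)
    (hd4 : ∀ x : ℝ, 0 < x → HasDerivAt f3 (f4 x) x)
    (hf3 : ∀ x : ℝ, 0 < x → 0 ≤ f3 x)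
    (hf4 : ∀ x : ℝ, 0 < x → 0 ≤ f4 x)
    (X : Ω → ℝ) (hX : ∀ ω, 0 < X ω)
    (hXint : Integrable X P)
    (hskew : 0 ≤ ∫ ω, (X ω - ∫ ω', X ω' ∂P) ^ 3 ∂P)
    (hfXint : Integrable (fun ω => f (X ω)) P)
    (hm2 : Integrable (fun ω => (X ω - ∫ ω', X ω' ∂P) ^ 2) P)
    (hm3 : Integrable (fun ω => (X ω - ∫ ω', X ω' ∂P) ^ 3) P) :
    (1 / 2) * f2 (∫ ω, X ω ∂P) * (∫ ω, (X ω - ∫ ω', X ω' ∂P) ^ 2 ∂P)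
      ≤ (∫ ω, f (X ω) ∂P) - f (∫ ω, X ω ∂P) := by
  set μ := ∫ ω, X ω ∂P
  have hμ : 0 < μ := integral_pos_of_forall_pos hXint hX
  have hm1 : Integrable (fun ω => X ω - μ) P := hXint.sub (integrable_const μ)
  have htaylor := fun ω => taylor_cubic_le_of_monotoneOn hd1 hd2 hd3
    (monotoneOn_Ioi_of_hasDerivAt_nonneg hd4 hf4) hμ (hX ω)
  have hmono := integral_mono (integrable_cubic hm1 hm2 hm3 _ _ _ _) hfXint htaylor
  have hcentered : ∫ ω, (X ω - μ) ∂P = 0 := by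
    simpa [centralMoment] using centralMoment_one (X := X) (μ := P)
  rw [integral_cubic hm1 hm2 hm3, hcentered] at hmono
  linarith [mul_nonneg (hf3 μ hμ) hskew]
end

section
/- Let (Ω, Σ, P) be a probability space, let k be a positive integer, and let X : Ω → (0,∞) be a random variable such that X, log(X), and X^{−i}·(X − E[X])^i for 1 ≤ i ≤ 2k−1 are integrable. Then log(E[X]) − E[log(X)] ≤ −∑_{i=1}^{2k−1} (1/i) · E[X^{−i}·(X − E[X])^i]. -/
/-!
Put `t = (X - E[X]) / X`, so that `log E[X] - log X = log (1 - t)` with `t < 1`. For odd `n`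
the Taylor remainder `log (1 - t) + ∑_{i ≤ n} t ^ i / i = -∫₀ᵗ s ^ n / (1 - s) ds` is `≤ 0` on the
whole range `t < 1`, not only for `|t| < 1`; integrating this pointwise bound gives the theorem.
-/

open MeasureTheory ProbabilityTheory Finset

theorem integral_pos_of_forall_pos_s7 {α : Type*} [MeasurableSpace α] {μ : Measure α} [NeZero μ]
    {f : α → ℝ} (hf : ∀ x, 0 < f x) (hfi : Integrable f μ) : 0 < ∫ x, f x ∂μ := by
  rw [integral_pos_iff_support_of_nonneg (fun x => (hf x).le) hfi,
    Function.support_eq_univ fun x => (hf x).ne']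
  simp [NeZero.ne μ]

theorem hasDerivAt_sum_pow_div (n : ℕ) (t : ℝ) :
    HasDerivAt (fun t : ℝ => ∑ i ∈ Icc 1 n, t ^ i / i) (∑ i ∈ range n, t ^ i) t := by
  have hd : HasDerivAt (fun t : ℝ => ∑ i ∈ Icc 1 n, t ^ i / i)
      (∑ i ∈ Icc 1 n, t ^ (i - 1)) t := by
    refine HasDerivAt.fun_sum fun i hi => ?_
    have hi0 : (i : ℝ) ≠ 0 := Nat.cast_ne_zero.2 (by grind)
    refine ((hasDerivAt_pow i t).div_const (i : ℝ)).congr_deriv ?_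
    field_simp
  convert hd using 1
  rw [← Ico_add_one_right_eq_Icc, sum_Ico_eq_sum_range]
  simp

/-- This is `exp (log (1 - t) + ∑ …) ≤ 1` with the logarithm cleared, so it makes sense on all
of `ℝ`; the derivative `-t ^ n * exp (∑ …)` has the sign of `-t` for odd `n`, so the maximum is
at `t = 0`. -/
theorem exp_sum_pow_div_mul_one_sub_le_one {n : ℕ} (hn : Odd n) (t : ℝ) :
    Real.exp (∑ i ∈ Icc 1 n, t ^ i / i) * (1 - t) ≤ 1 := by
  set S : ℝ → ℝ := fun t => ∑ i ∈ Icc 1 n, t ^ i / i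
  set h : ℝ → ℝ := fun t => Real.exp (S t) * (1 - t)
  have hderiv (s : ℝ) : HasDerivAt h (-s ^ n * Real.exp (S s)) s := by
    refine (((hasDerivAt_sum_pow_div n s).exp).mul ((hasDerivAt_id s).const_sub 1)).congr_deriv ?_
    simp only [id_eq]
    linear_combination -Real.exp (S s) * geom_sum_mul s n
  have hd : Differentiable ℝ h := fun s => (hderiv s).differentiableAt
  have h0 : h 0 = 1 := by
    simp only [h, S]
    rw [sum_eq_zero fun i hi => by rw [zero_pow (by grind), zero_div]]
    simp
  change h t ≤ 1
  rw [← h0]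
  rcases le_or_gt t 0 with ht | ht
  · have hmono : MonotoneOn h (Set.Iic 0) := by
      refine monotoneOn_of_deriv_nonneg (convex_Iic 0) hd.continuous.continuousOn
        hd.differentiableOn fun x hx => ?_
      rw [interior_Iic] at hx
      rw [(hderiv x).deriv]
      nlinarith [hn.pow_neg (show x < 0 from hx), Real.exp_pos (S x)]
    exact hmono ht Set.self_mem_Iic ht
  · have hanti : AntitoneOn h (Set.Ici 0) := by
      refine antitoneOn_of_deriv_nonpos (convex_Ici 0) hd.continuous.continuousOn
        hd.differentiableOn fun x hx => ?_
      rw [interior_Ici] at hx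
      rw [(hderiv x).deriv]
      nlinarith [pow_pos (show 0 < x from hx) n, Real.exp_pos (S x)]
    exact hanti Set.self_mem_Ici ht.le ht.le

theorem log_one_sub_le_neg_sum_pow_div {n : ℕ} (hn : Odd n) {t : ℝ} (ht : t < 1) :
    Real.log (1 - t) ≤ -∑ i ∈ Icc 1 n, t ^ i / i := by
  have h1t : 0 < 1 - t := by linarith
  have hexp : Real.exp (∑ i ∈ Icc 1 n, t ^ i / i) ≤ (1 - t)⁻¹ := by
    rw [inv_eq_one_div, le_div_iff₀ h1t]
    exact exp_sum_pow_div_mul_one_sub_le_one hn t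
  have hlog := (Real.le_log_iff_exp_le (inv_pos.2 h1t)).2 hexp
  rw [Real.log_inv] at hlog
  linarith

theorem log_sub_log_le_neg_sum {n : ℕ} (hn : Odd n) {m x : ℝ} (hm : 0 < m) (hx : 0 < x) :
    Real.log m - Real.log x ≤ -∑ i ∈ Icc 1 n, 1 / (i : ℝ) * (x ^ (-(i : ℤ)) * (x - m) ^ i) := by
  have ht : (x - m) / x < 1 := by rw [div_lt_one hx]; linarith
  convert log_one_sub_le_neg_sum_pow_div hn ht using 1
  · rw [← Real.log_div hm.ne' hx.ne']
    congr 1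
    field_simp
    ring
  · congr 1
    refine sum_congr rfl fun i _ => ?_
    rw [zpow_neg, zpow_natCast, div_pow]
    ring

/-- Let `k ≥ 1` and let `X : Ω → (0,∞)` be a random variable such that `X`,
`log(X)` and `X^{−i}·(X − E[X])^i` (`1 ≤ i ≤ 2k−1`) are integrable. Then
`log(E[X]) − E[log(X)] ≤ −∑_{i=1}^{2k−1} (1/i)·E[X^{−i}·(X − E[X])^i]`. -/
theorem jensen_gap_log_higher_order_upper
    {Ω : Type*} [MeasurableSpace Ω] (P : Measure Ω) [IsProbabilityMeasure P]
    (k : ℕ) (hk : 0 < k)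
    (X : Ω → ℝ) (hX : ∀ ω, 0 < X ω)
    (hXint : Integrable X P)
    (hlogint : Integrable (fun ω => Real.log (X ω)) P)
    (hmom : ∀ i ∈ Finset.Icc 1 (2 * k - 1),
      Integrable (fun ω => X ω ^ (-(i : ℤ)) * (X ω - ∫ ω', X ω' ∂P) ^ i) P) :
    Real.log (∫ ω, X ω ∂P) - ∫ ω, Real.log (X ω) ∂P
      ≤ -∑ i ∈ Finset.Icc 1 (2 * k - 1),
          (1 / (i : ℝ)) * (∫ ω, X ω ^ (-(i : ℤ)) * (X ω - ∫ ω', X ω' ∂P) ^ i ∂P) := by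
  set m := ∫ ω, X ω ∂P
  have hm : 0 < m := integral_pos_of_forall_pos_s7 hX hXint
  have hodd : Odd (2 * k - 1) := ⟨k - 1, by omega⟩
  have hterm : ∀ i ∈ Icc 1 (2 * k - 1),
      Integrable (fun ω => 1 / (i : ℝ) * (X ω ^ (-(i : ℤ)) * (X ω - m) ^ i)) P :=
    fun i hi => (hmom i hi).const_mul _
  calc Real.log m - ∫ ω, Real.log (X ω) ∂P = ∫ ω, Real.log m - Real.log (X ω) ∂P := by
        rw [integral_sub (integrable_const _) hlogint, integral_const, probReal_univ, one_smul]
    _ ≤ ∫ ω, -∑ i ∈ Icc 1 (2 * k - 1), 1 / (i : ℝ) * (X ω ^ (-(i : ℤ)) * (X ω - m) ^ i) ∂P :=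
        integral_mono ((integrable_const _).sub hlogint) (integrable_finsetSum _ hterm).neg
          fun ω => log_sub_log_le_neg_sum hodd hm (hX ω)
    _ = _ := by
        rw [integral_neg, integral_finsetSum _ hterm]
        simp_rw [integral_const_mul]
end

section
/- Let a > 0, let k be a positive integer, and let X be a random variable with the Gamma distribution with shape parameter a and rate 1, i.e., with density x^{a−1}·e^{−x}/Γ(a) on (0,∞). Then ∑_{j=1}^{2k−1} ( 1/j + b_{k,j} · Γ(a+j) / (Γ(a)·a^j) ) ≤ log(E[X]) − E[log(X)], and if moreover a > 2k−1 then log(E[X]) − E[log(X)] ≤ −∑_{j=1}^{2k−1} ( 1/j + b_{k,j} · Γ(a−j)·a^j / Γ(a) ). -/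
/-!
With `n = 2k - 1`, the polynomial `∑_{j=1}^n (1/j + b_{k,j} y^j)` equals `∑_{j=1}^n (1-y)^j/j`,
the Taylor polynomial of degree `n` of `-log` at `1`. The remainder `-log y - ∑_{j=1}^n (1-y)^j/j`
has derivative `-(1-y)^n/y`; since `n` is odd it changes sign only at `y = 1`, where the
remainder vanishes, so the polynomial lies below `-log y` on `(0, ∞)`. Substituting `y = X/a`
and `y = a/X` and taking expectations gives the two bounds, because `E[X] = a`,
`E[X^j] = Γ(a+j)/Γ(a)` and `E[X^{-j}] = Γ(a-j)/Γ(a)` for `j < a`.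
-/

open MeasureTheory ProbabilityTheory Finset

lemma sum_Icc_one_eq_sum_range {M : Type*} [AddCommMonoid M] (f : ℕ → M) (n : ℕ) :
    ∑ j ∈ Icc 1 n, f j = ∑ i ∈ range n, f (i + 1) := by
  rw [range_eq_Ico, sum_Ico_add', zero_add, Ico_add_one_right_eq_Icc]

lemma one_sub_pow_eq_one_add_sum_Icc {R : Type*} [CommRing R] (y : R) (n : ℕ) :
    (1 - y) ^ n = 1 + ∑ j ∈ Icc 1 n, (-1) ^ j * n.choose j * y ^ j := by
  rw [sub_eq_neg_add, add_pow, sum_range_succ', sum_Icc_one_eq_sum_range, add_comm]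
  simp only [neg_pow y, one_pow, mul_one, pow_zero, Nat.choose_zero_right, Nat.cast_one]
  congr 1
  exact sum_congr rfl fun i _ => by ring

lemma sum_Icc_neg_one_pow_div_mul_choose_mul_pow {K : Type*} [Field K] [CharZero K]
    (y : K) (n : ℕ) :
    ∑ j ∈ Icc 1 n, (-1) ^ j / j * n.choose j * y ^ j =
      ∑ j ∈ Icc 1 n, ((1 - y) ^ j - 1) / j := by
  induction n with
  | zero => simp
  | succ n ih =>
    -- Pascal's rule, then `C(n, j - 1) / j = C(n + 1, j) / (n + 1)`.
    have step : ∀ j ∈ Icc 1 (n + 1), (-1 : K) ^ j / j * (n + 1).choose j * y ^ j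
        = (-1) ^ j / j * n.choose j * y ^ j + (-1) ^ j * (n + 1).choose j * y ^ j / (n + 1) := by
      intro j hj
      obtain ⟨i, rfl⟩ := Nat.exists_eq_add_of_le' (mem_Icc.mp hj).1
      have pascal : ((n + 1).choose (i + 1) : K) = n.choose i + n.choose (i + 1) := by
        exact_mod_cast Nat.choose_succ_succ n i
      have absorb : ((n : K) + 1) * n.choose i = (n + 1).choose (i + 1) * (i + 1) := by
        exact_mod_cast Nat.add_one_mul_choose_eq n i
      have key : ((n + 1).choose (i + 1) : K) / (i + 1)
          = n.choose (i + 1) / (i + 1) + (n + 1).choose (i + 1) / (n + 1) := by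
        field_simp
        linear_combination (↑n + 1) * pascal + absorb
      push_cast
      linear_combination (-1) ^ (i + 1) * y ^ (i + 1) * key
    rw [sum_congr rfl step, sum_add_distrib, sum_Icc_succ_top (by omega),
      Nat.choose_succ_self, ← sum_div, ← add_sub_cancel_left 1 (∑ j ∈ Icc 1 (n + 1), _),
      ← one_sub_pow_eq_one_add_sum_Icc, ih, sum_Icc_succ_top (by omega)]
    push_cast
    ring

lemma hasDerivAt_log_add_sum_one_sub_pow_div (n : ℕ) {y : ℝ} (hy : y ≠ 0) :
    HasDerivAt (fun y => Real.log y + ∑ j ∈ Icc 1 n, (1 - y) ^ j / j) ((1 - y) ^ n / y) y := by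
  simp_rw [sum_Icc_one_eq_sum_range]
  have hsum : HasDerivAt (fun y : ℝ => ∑ i ∈ range n, (1 - y) ^ (i + 1) / ↑(i + 1))
      (∑ i ∈ range n, -(1 - y) ^ i) y := by
    refine HasDerivAt.fun_sum fun i _ => ?_
    refine ((((hasDerivAt_id' y).const_sub 1).fun_pow (i + 1)).div_const
      ((i + 1 : ℕ) : ℝ)).congr_deriv ?_
    rw [Nat.add_sub_cancel]
    field_simp
  refine ((Real.hasDerivAt_log hy).add hsum).congr_deriv ?_
  rw [sum_neg_distrib]
  field_simp
  linear_combination geom_sum_mul (1 - y) n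

lemma sum_Icc_one_sub_pow_div_le_neg_log {n : ℕ} (hn : Odd n) {y : ℝ} (hy : 0 < y) :
    ∑ j ∈ Icc 1 n, (1 - y) ^ j / j ≤ -Real.log y := by
  set h : ℝ → ℝ := fun y => Real.log y + ∑ j ∈ Icc 1 n, (1 - y) ^ j / j
  have hderiv : ∀ x ∈ Set.Ioi (0 : ℝ), HasDerivAt h ((1 - x) ^ n / x) x :=
    fun x hx => hasDerivAt_log_add_sum_one_sub_pow_div n (ne_of_gt hx)
  have hcont : ContinuousOn h (Set.Ioi 0) :=
    fun x hx => (hderiv x hx).continuousAt.continuousWithinAt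
  have h_one : h 1 = 0 := by
    simp only [h, Real.log_one, sub_self, zero_add]
    exact sum_eq_zero fun j hj => by simp [zero_pow (by grind : j ≠ 0)]
  have h_le_one : h y ≤ h 1 := by
    rcases le_total y 1 with hy1 | hy1
    · refine monotoneOn_of_hasDerivWithinAt_nonneg (f' := fun x => (1 - x) ^ n / x)
        (convex_Ioc 0 1) (hcont.mono Set.Ioc_subset_Ioi_self) (fun x hx => ?_) (fun x hx => ?_)
        ⟨hy, hy1⟩ ⟨one_pos, le_rfl⟩ hy1
      all_goals rw [interior_Ioc] at hx
      · exact (hderiv x hx.1).hasDerivWithinAt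
      · exact div_nonneg (pow_nonneg (by linarith [hx.2]) n) hx.1.le
    · refine antitoneOn_of_hasDerivWithinAt_nonpos (f' := fun x => (1 - x) ^ n / x)
        (convex_Ici 1) (hcont.mono fun x (hx : 1 ≤ x) => one_pos.trans_le hx)
        (fun x hx => ?_) (fun x hx => ?_) Set.self_mem_Ici hy1 hy1
      all_goals rw [interior_Ici] at hx
      · exact (hderiv x (one_pos.trans hx.out)).hasDerivWithinAt
      · exact div_nonpos_of_nonpos_of_nonneg (hn.pow_nonpos (by linarith [hx.out]))
          (by linarith [hx.out])
  have : h y ≤ 0 := h_one ▸ h_le_one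
  simp only [h] at this
  linarith

open Real in
lemma abs_log_le_rpow_add_rpow_neg_div {x ε : ℝ} (hx : 0 ≤ x) (hε : 0 < ε) :
    |log x| ≤ (x ^ ε + x ^ (-ε)) / ε := by
  have hle := log_le_rpow_div hx hε
  have hle_inv := log_le_rpow_div (inv_nonneg.mpr hx) hε
  rw [log_inv, inv_rpow hx, ← rpow_neg hx] at hle_inv
  rw [abs_le, add_div]
  constructor <;>
    linarith [div_nonneg (rpow_nonneg hx ε) hε.le, div_nonneg (rpow_nonneg hx (-ε)) hε.le]

-- The paper's `b_{k,j}`, with `n = 2k - 1`.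
noncomputable def jensenCoeff (n j : ℕ) : ℝ := (-1) ^ j / j * n.choose j

lemma sum_inv_add_jensenCoeff_mul_pow_le_neg_log {n : ℕ} (hn : Odd n) {y : ℝ} (hy : 0 < y) :
    ∑ j ∈ Icc 1 n, (1 / (j : ℝ) + jensenCoeff n j * y ^ j) ≤ -Real.log y := by
  rw [sum_add_distrib]
  simp only [jensenCoeff]
  rw [sum_Icc_neg_one_pow_div_mul_choose_mul_pow, ← sum_add_distrib]
  refine le_of_eq_of_le (sum_congr rfl fun j _ => ?_) (sum_Icc_one_sub_pow_div_le_neg_log hn hy)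
  ring

theorem sum_inv_add_jensenCoeff_mul_integral_pow_le_neg_integral_log
    {Ω : Type*} [MeasurableSpace Ω] {μ : Measure Ω} [IsProbabilityMeasure μ] {Y : Ω → ℝ}
    {n : ℕ} (hn : Odd n) (hY : ∀ᵐ ω ∂μ, 0 < Y ω)
    (hlog : Integrable (fun ω => Real.log (Y ω)) μ)
    (hmom : ∀ j ∈ Icc 1 n, Integrable (fun ω => Y ω ^ j) μ) :
    ∑ j ∈ Icc 1 n, (1 / (j : ℝ) + jensenCoeff n j * ∫ ω, Y ω ^ j ∂μ)
      ≤ -∫ ω, Real.log (Y ω) ∂μ := by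
  have hint : ∀ j ∈ Icc 1 n,
      Integrable (fun ω => 1 / (j : ℝ) + jensenCoeff n j * Y ω ^ j) μ :=
    fun j hj => (integrable_const _).add ((hmom j hj).const_mul _)
  calc ∑ j ∈ Icc 1 n, (1 / (j : ℝ) + jensenCoeff n j * ∫ ω, Y ω ^ j ∂μ)
      = ∫ ω, ∑ j ∈ Icc 1 n, (1 / (j : ℝ) + jensenCoeff n j * Y ω ^ j) ∂μ := by
        rw [integral_finsetSum _ hint]
        refine sum_congr rfl fun j hj => ?_
        rw [integral_add (integrable_const _) ((hmom j hj).const_mul _), integral_const,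
          integral_const_mul, probReal_univ, one_smul]
    _ ≤ ∫ ω, -Real.log (Y ω) ∂μ :=
        integral_mono_ae (integrable_finsetSum _ hint) hlog.neg
          (hY.mono fun ω hω => sum_inv_add_jensenCoeff_mul_pow_le_neg_log hn hω)
    _ = -∫ ω, Real.log (Y ω) ∂μ := integral_neg _

namespace ProbabilityTheory

open Set Real

variable {a r : ℝ}

lemma measurable_gammaPDF (a r : ℝ) : Measurable (gammaPDF a r) :=
  (measurable_gammaPDFReal a r).ennreal_ofReal

lemma gammaMeasure_eq_withDensity_restrict (a r : ℝ) :
    gammaMeasure a r = (volume.restrict (Ioi 0)).withDensity (gammaPDF a r) := by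
  rw [gammaMeasure, ← withDensity_indicator measurableSet_Ioi]
  refine withDensity_congr_ae ?_
  filter_upwards [volume.ae_ne 0] with x hx
  rcases hx.lt_or_gt with hx | hx
  · rw [indicator_of_notMem (s := Ioi 0) (not_lt.mpr hx.le), gammaPDF_of_neg hx]
  · rw [indicator_of_mem (s := Ioi 0) hx]

lemma ae_pos_gammaMeasure (a r : ℝ) : ∀ᵐ x ∂gammaMeasure a r, 0 < x := by
  rw [gammaMeasure_eq_withDensity_restrict]
  exact (withDensity_absolutelyContinuous _ _).ae_le (ae_restrict_mem measurableSet_Ioi)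

lemma integral_gammaMeasure (ha : 0 < a) (hr : 0 < r) (f : ℝ → ℝ) :
    ∫ x, f x ∂gammaMeasure a r = ∫ x in Ioi 0, gammaPDFReal a r x * f x := by
  rw [gammaMeasure_eq_withDensity_restrict, integral_withDensity_eq_integral_toReal_smul
    (measurable_gammaPDF a r) (ae_of_all _ fun _ => ENNReal.ofReal_lt_top)]
  simp only [gammaPDF, ENNReal.toReal_ofReal (gammaPDFReal_nonneg ha hr _), smul_eq_mul]

lemma integrable_gammaMeasure_iff (ha : 0 < a) (hr : 0 < r) {f : ℝ → ℝ} :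
    Integrable f (gammaMeasure a r) ↔
      IntegrableOn (fun x => gammaPDFReal a r x * f x) (Ioi 0) := by
  rw [gammaMeasure_eq_withDensity_restrict, integrable_withDensity_iff_integrable_smul'
    (measurable_gammaPDF a r) (ae_of_all _ fun _ => ENNReal.ofReal_lt_top)]
  simp only [gammaPDF, ENNReal.toReal_ofReal (gammaPDFReal_nonneg ha hr _), smul_eq_mul,
    IntegrableOn]

lemma gammaPDFReal_mul_rpow {p x : ℝ} (hx : 0 < x) :
    gammaPDFReal a r x * x ^ p = r ^ a / Gamma a * (x ^ (a + p - 1) * exp (-(r * x))) := by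
  rw [gammaPDFReal, if_pos hx.le, add_sub_right_comm, rpow_add hx]
  ring

lemma integrable_rpow_gammaMeasure (ha : 0 < a) (hr : 0 < r) {p : ℝ} (hp : 0 < a + p) :
    Integrable (fun x => x ^ p) (gammaMeasure a r) := by
  rw [integrable_gammaMeasure_iff ha hr]
  have h : IntegrableOn (fun x => r ^ a / Gamma a * (x ^ (a + p - 1) * exp (-r * x ^ (1 : ℝ))))
      (Ioi 0) :=
    (integrableOn_rpow_mul_exp_neg_mul_rpow (by linarith) one_pos hr).const_mul _
  refine h.congr_fun (fun x (hx : 0 < x) => ?_) measurableSet_Ioi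
  rw [gammaPDFReal_mul_rpow hx]
  simp only [rpow_one, neg_mul]

lemma integral_rpow_gammaMeasure (ha : 0 < a) (hr : 0 < r) {p : ℝ} (hp : 0 < a + p) :
    ∫ x, x ^ p ∂gammaMeasure a r = Gamma (a + p) / (Gamma a * r ^ p) := by
  rw [integral_gammaMeasure ha hr, setIntegral_congr_fun measurableSet_Ioi
    fun x (hx : 0 < x) => gammaPDFReal_mul_rpow hx, integral_const_mul,
    integral_rpow_mul_exp_neg_mul_Ioi hp hr, one_div, inv_rpow hr.le, rpow_add hr]
  have := (Gamma_pos_of_pos ha).ne'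
  have := (rpow_pos_of_pos hr a).ne'
  have := (rpow_pos_of_pos hr p).ne'
  field_simp

lemma integrable_pow_gammaMeasure (ha : 0 < a) (hr : 0 < r) (j : ℕ) :
    Integrable (fun x => x ^ j) (gammaMeasure a r) := by
  simpa only [rpow_natCast] using integrable_rpow_gammaMeasure ha hr (p := j) (by positivity)

lemma integral_pow_gammaMeasure (ha : 0 < a) (hr : 0 < r) (j : ℕ) :
    ∫ x, x ^ j ∂gammaMeasure a r = Gamma (a + j) / (Gamma a * r ^ j) := by
  simpa only [rpow_natCast] using integral_rpow_gammaMeasure ha hr (p := j) (by positivity)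

lemma rpow_neg_natCast_ae_eq_inv_pow_gammaMeasure (a r : ℝ) (j : ℕ) :
    (fun x => x ^ (-(j : ℝ))) =ᵐ[gammaMeasure a r] fun x => (x ^ j)⁻¹ := by
  filter_upwards [ae_pos_gammaMeasure a r] with x hx
  rw [rpow_neg hx.le, rpow_natCast]

lemma integrable_inv_pow_gammaMeasure (ha : 0 < a) (hr : 0 < r) {j : ℕ} (hj : (j : ℝ) < a) :
    Integrable (fun x => (x ^ j)⁻¹) (gammaMeasure a r) :=
  (integrable_rpow_gammaMeasure ha hr (by linarith)).congr
    (rpow_neg_natCast_ae_eq_inv_pow_gammaMeasure a r j)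

lemma integral_inv_pow_gammaMeasure (ha : 0 < a) (hr : 0 < r) {j : ℕ} (hj : (j : ℝ) < a) :
    ∫ x, (x ^ j)⁻¹ ∂gammaMeasure a r = Gamma (a - j) * r ^ j / Gamma a := by
  rw [← integral_congr_ae (rpow_neg_natCast_ae_eq_inv_pow_gammaMeasure a r j),
    integral_rpow_gammaMeasure ha hr (by linarith), rpow_neg hr.le, rpow_natCast,
    ← sub_eq_add_neg]
  have := (Gamma_pos_of_pos ha).ne'
  have := (pow_pos hr j).ne'
  field_simp

lemma integrable_log_gammaMeasure (ha : 0 < a) (hr : 0 < r) :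
    Integrable log (gammaMeasure a r) := by
  have hbound := ((integrable_rpow_gammaMeasure ha hr (p := a / 2) (by linarith)).add
    (integrable_rpow_gammaMeasure ha hr (p := -(a / 2)) (by linarith))).div_const (a / 2)
  refine hbound.mono' measurable_log.aestronglyMeasurable ?_
  filter_upwards [ae_pos_gammaMeasure a r] with x hx
  exact abs_log_le_rpow_add_rpow_neg_div hx.le (by linarith)

lemma sum_inv_add_jensenCoeff_mul_gamma_le_log_sub_integral_log_gammaMeasure (ha : 0 < a)
    {n : ℕ} (hn : Odd n) :
    ∑ j ∈ Icc 1 n, (1 / (j : ℝ) + jensenCoeff n j * (Gamma (a + j) / (Gamma a * a ^ j)))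
      ≤ log a - ∫ x, log x ∂gammaMeasure a 1 := by
  have := isProbabilityMeasure_gammaMeasure ha one_pos
  have hlog_div : (fun x => log x - log a) =ᵐ[gammaMeasure a 1] fun x => log (x / a) :=
    (ae_pos_gammaMeasure a 1).mono fun x hx => (log_div hx.ne' ha.ne').symm
  have hlog := (integrable_log_gammaMeasure ha one_pos).sub (integrable_const (log a))
  have hmom (j : ℕ) :
      ∫ x, (x / a) ^ j ∂gammaMeasure a 1 = Gamma (a + j) / (Gamma a * a ^ j) := by
    simp_rw [div_pow]
    rw [integral_div, integral_pow_gammaMeasure ha one_pos, one_pow, mul_one, div_div]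
  calc _ = ∑ j ∈ Icc 1 n,
          (1 / (j : ℝ) + jensenCoeff n j * ∫ x, (x / a) ^ j ∂gammaMeasure a 1) := by
        simp only [hmom]
    _ ≤ -∫ x, log (x / a) ∂gammaMeasure a 1 :=
        sum_inv_add_jensenCoeff_mul_integral_pow_le_neg_integral_log hn
          ((ae_pos_gammaMeasure a 1).mono fun x hx => div_pos hx ha) (hlog.congr hlog_div)
          fun j _ => by
            simpa only [div_pow] using (integrable_pow_gammaMeasure ha one_pos j).div_const _
    _ = log a - ∫ x, log x ∂gammaMeasure a 1 := by
        rw [← integral_congr_ae hlog_div, integral_sub (integrable_log_gammaMeasure ha one_pos)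
          (integrable_const _), integral_const, probReal_univ, one_smul, neg_sub]

lemma log_sub_integral_log_gammaMeasure_le_neg_sum_inv_add_jensenCoeff_mul_gamma (ha : 0 < a)
    {n : ℕ} (hn : Odd n) (hna : (n : ℝ) < a) :
    log a - ∫ x, log x ∂gammaMeasure a 1
      ≤ -∑ j ∈ Icc 1 n,
          (1 / (j : ℝ) + jensenCoeff n j * (Gamma (a - j) * a ^ j / Gamma a)) := by
  have := isProbabilityMeasure_gammaMeasure ha one_pos
  have hlt : ∀ j ∈ Finset.Icc 1 n, (j : ℝ) < a := fun j hj =>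
    (Nat.cast_le.mpr (Finset.mem_Icc.mp hj).2).trans_lt hna
  have hlog_div : (fun x => log a - log x) =ᵐ[gammaMeasure a 1] fun x => log (a / x) :=
    (ae_pos_gammaMeasure a 1).mono fun x hx => (log_div ha.ne' hx.ne').symm
  have hlog := (integrable_const (log a)).sub (integrable_log_gammaMeasure ha one_pos)
  have hmom : ∀ j ∈ Finset.Icc 1 n,
      ∫ x, (a / x) ^ j ∂gammaMeasure a 1 = Gamma (a - j) * a ^ j / Gamma a := fun j hj => by
    simp_rw [div_pow, div_eq_mul_inv (a ^ j)]
    rw [integral_const_mul, integral_inv_pow_gammaMeasure ha one_pos (hlt j hj), one_pow, mul_one]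
    ring
  rw [le_neg]
  calc _ = ∑ j ∈ Icc 1 n,
          (1 / (j : ℝ) + jensenCoeff n j * ∫ x, (a / x) ^ j ∂gammaMeasure a 1) :=
        sum_congr rfl fun j hj => by rw [hmom j hj]
    _ ≤ -∫ x, log (a / x) ∂gammaMeasure a 1 :=
        sum_inv_add_jensenCoeff_mul_integral_pow_le_neg_integral_log hn
          ((ae_pos_gammaMeasure a 1).mono fun x hx => div_pos ha hx) (hlog.congr hlog_div)
          fun j hj => by
            simpa only [div_pow, div_eq_mul_inv (a ^ j)] using
              (integrable_inv_pow_gammaMeasure ha one_pos (hlt j hj)).const_mul _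
    _ = -(log a - ∫ x, log x ∂gammaMeasure a 1) := by
        rw [← integral_congr_ae hlog_div, integral_sub (integrable_const _)
          (integrable_log_gammaMeasure ha one_pos), integral_const, probReal_univ, one_smul]

end ProbabilityTheory

/-- Let `a > 0`, let `k ≥ 1`, and let `X` be a random variable with the
Gamma distribution with shape `a` and rate `1`. Then, with `b_{k,j} = ((−1)^j/j)·C(2k−1,j)`,
`∑_{j=1}^{2k−1} (1/j + b_{k,j}·Γ(a+j)/(Γ(a)·a^j)) ≤ log(E[X]) − E[log(X)]`, and if moreover
`a > 2k−1` then `log(E[X]) − E[log(X)] ≤ −∑_{j=1}^{2k−1} (1/j + b_{k,j}·Γ(a−j)·a^j/Γ(a))`. -/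
theorem jensen_gap_log_gamma_distribution
    {Ω : Type*} [MeasurableSpace Ω] (P : Measure Ω) [IsProbabilityMeasure P]
    (a : ℝ) (ha : 0 < a) (k : ℕ) (hk : 0 < k)
    (X : Ω → ℝ) (hX : Measurable X)
    (hmap : P.map X = gammaMeasure a 1) :
    (∑ j ∈ Finset.Icc 1 (2 * k - 1),
        (1 / (j : ℝ) + ((-1 : ℝ) ^ j / (j : ℝ)) * ((2 * k - 1).choose j : ℝ) *
          (Real.Gamma (a + j) / (Real.Gamma a * a ^ (j : ℕ))))
      ≤ Real.log (∫ ω, X ω ∂P) - ∫ ω, Real.log (X ω) ∂P) ∧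
    (((2 * k - 1 : ℕ) : ℝ) < a →
      Real.log (∫ ω, X ω ∂P) - ∫ ω, Real.log (X ω) ∂P
        ≤ -∑ j ∈ Finset.Icc 1 (2 * k - 1),
            (1 / (j : ℝ) + ((-1 : ℝ) ^ j / (j : ℝ)) * ((2 * k - 1).choose j : ℝ) *
              (Real.Gamma (a - j) * a ^ (j : ℕ) / Real.Gamma a))) := by
  have hlaw : HasLaw X (gammaMeasure a 1) P := ⟨hX.aemeasurable, hmap⟩
  have hmean : ∫ ω, X ω ∂P = a := by
    rw [hlaw.integral_eq]
    simpa [Real.Gamma_add_one ha.ne', (Real.Gamma_pos_of_pos ha).ne'] using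
      integral_pow_gammaMeasure ha one_pos 1
  have hlog : ∫ ω, Real.log (X ω) ∂P = ∫ x, Real.log x ∂gammaMeasure a 1 :=
    hlaw.integral_comp Real.measurable_log.aestronglyMeasurable
  have hodd : Odd (2 * k - 1) := ⟨k - 1, by omega⟩
  rw [hmean, hlog]
  exact ⟨sum_inv_add_jensenCoeff_mul_gamma_le_log_sub_integral_log_gammaMeasure ha hodd,
    log_sub_integral_log_gammaMeasure_le_neg_sum_inv_add_jensenCoeff_mul_gamma ha hodd⟩
end

section
/- Let X be a random variable with the standard Gaussian distribution N(0,1), let f(x) = exp(x), and let k be a positive integer. Then ∑_{i=1}^{2k−1} E[X^i] / i! ≤ E[exp(X)] − 1 ≤ √e · ∑_{i=1}^{2k−1} ((−1)^{i+1} / i!) · E[Y^i], where Y is a random variable with the Gaussian distribution N(1,1), and moreover E[exp(X)] − 1 = √e − 1. -/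
open MeasureTheory ProbabilityTheory Finset Real
open scoped NNReal Nat

/-!
Even-degree Taylor polynomials of `exp` lie below `exp` on all of `ℝ`: on `(-∞, 0]` the sign of
the remainder `exp x - ∑_{i<n} xⁱ/i!` is `(-1)ⁿ`, since each remainder is the antiderivative of
the previous one vanishing at `0`. Integrating against the law of `X` gives the lower bound.
Since `-Y ~ N(-1, 1)`, the same bound reads `1 - ∑ (-1)ⁱ⁺¹ E[Yⁱ]/i! ≤ E[e^{-Y}] = e^{-1/2}`, and
multiplying by `√e = E[e^X]` gives the upper bound.
-/

namespace Real

theorem hasDerivAt_sum_range_pow_div_factorial (n : ℕ) (x : ℝ) :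
    HasDerivAt (fun y : ℝ ↦ ∑ i ∈ range (n + 1), y ^ i / i !) (∑ i ∈ range n, x ^ i / i !) x := by
  induction n with
  | zero => simpa using hasDerivAt_const x (1 : ℝ)
  | succ n ih =>
    have h := ih.fun_add ((hasDerivAt_pow (n + 1) x).div_const ((n + 1 : ℕ) ! : ℝ))
    simp only [← sum_range_succ] at h
    refine h.congr_deriv ?_
    rw [sum_range_succ, Nat.factorial_succ, add_tsub_cancel_right]
    push_cast
    field_simp

theorem neg_one_pow_mul_exp_sub_sum_nonneg (n : ℕ) {x : ℝ} (hx : x ≤ 0) :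
    0 ≤ (-1) ^ n * (exp x - ∑ i ∈ range n, x ^ i / i !) := by
  induction n generalizing x with
  | zero => simpa using (exp_pos x).le
  | succ n ih =>
    set g : ℝ → ℝ := fun y ↦ (-1) ^ (n + 1) * (exp y - ∑ i ∈ range (n + 1), y ^ i / i !)
    have hg : ∀ y, HasDerivAt g (-((-1) ^ n * (exp y - ∑ i ∈ range n, y ^ i / i !))) y := by
      intro y
      refine (((hasDerivAt_exp y).sub (hasDerivAt_sum_range_pow_div_factorial n y)).const_mul
        ((-1 : ℝ) ^ (n + 1))).congr_deriv ?_
      ring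
    have hanti : AntitoneOn g (Set.Iic 0) := by
      refine antitoneOn_of_deriv_nonpos (convex_Iic 0)
        (fun y _ ↦ (hg y).continuousAt.continuousWithinAt)
        (fun y _ ↦ (hg y).differentiableAt.differentiableWithinAt) fun y hy ↦ ?_
      rw [interior_Iic] at hy
      rw [(hg y).deriv, neg_nonpos]
      exact ih (le_of_lt hy)
    have hg0 : g 0 = 0 := by simp [g, sum_range_succ']
    calc 0 = g 0 := hg0.symm
      _ ≤ g x := hanti hx (Set.mem_Iic.2 le_rfl) hx

theorem sum_range_two_mul_le_exp (m : ℕ) (x : ℝ) : ∑ i ∈ range (2 * m), x ^ i / i ! ≤ exp x := by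
  rcases le_total 0 x with hx | hx
  · exact sum_le_exp_of_nonneg hx _
  · simpa [pow_mul] using neg_one_pow_mul_exp_sub_sum_nonneg (2 * m) hx

end Real

theorem Finset.sum_range_eq_add_sum_Icc {M : Type*} [AddCommMonoid M] (f : ℕ → M) {n : ℕ}
    (hn : 0 < n) : ∑ i ∈ range n, f i = f 0 + ∑ i ∈ Icc 1 (n - 1), f i := by
  rw [sum_range_eq_add_Ico f hn, ← Ico_add_one_right_eq_Icc, Nat.sub_one_add_one hn.ne']

section Moments

variable {Ω : Type*} [MeasurableSpace Ω]

theorem sum_range_two_mul_moment_div_factorial_le_integral_exp {μ : Measure Ω} {X : Ω → ℝ}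
    (h_pow : ∀ i, Integrable (fun ω ↦ X ω ^ i) μ) (h_exp : Integrable (fun ω ↦ exp (X ω)) μ)
    (m : ℕ) : ∑ i ∈ range (2 * m), (∫ ω, X ω ^ i ∂μ) / i ! ≤ ∫ ω, exp (X ω) ∂μ := by
  calc ∑ i ∈ range (2 * m), (∫ ω, X ω ^ i ∂μ) / i !
      = ∫ ω, (∑ i ∈ range (2 * m), X ω ^ i / i !) ∂μ := by
        rw [integral_finsetSum _ fun i _ ↦ (h_pow i).div_const _]
        simp only [integral_div]
    _ ≤ ∫ ω, exp (X ω) ∂μ :=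
        integral_mono (integrable_finsetSum _ fun i _ ↦ (h_pow i).div_const _) h_exp
          fun ω ↦ sum_range_two_mul_le_exp m (X ω)

variable {P : Measure Ω} {X : Ω → ℝ} {μ : ℝ} {v : ℝ≥0}

theorem map_neg_eq_gaussianReal (hX : P.map X = gaussianReal μ v) :
    P.map (fun ω ↦ -X ω) = gaussianReal (-μ) v := by
  have hXm : AEMeasurable X P := aemeasurable_of_map_neZero (by rw [hX]; infer_instance)
  rw [← gaussianReal_map_neg, ← hX, AEMeasurable.map_map_of_aemeasurable
    measurable_neg.aemeasurable hXm]
  rfl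

theorem integral_exp_of_map_eq_gaussianReal (hX : P.map X = gaussianReal μ v) :
    ∫ ω, exp (X ω) ∂P = exp (μ + v / 2) := by
  simpa [mgf] using mgf_gaussianReal hX 1

variable [IsProbabilityMeasure P]

theorem integrable_exp_mul_of_map_eq_gaussianReal (hX : P.map X = gaussianReal μ v) (t : ℝ) :
    Integrable (fun ω ↦ exp (t * X ω)) P :=
  mgf_pos_iff.mp (by rw [mgf_gaussianReal hX]; exact exp_pos _)

theorem integrable_pow_of_map_eq_gaussianReal (hX : P.map X = gaussianReal μ v) (n : ℕ) :
    Integrable (fun ω ↦ X ω ^ n) P :=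
  integrable_pow_of_integrable_exp_mul one_ne_zero (integrable_exp_mul_of_map_eq_gaussianReal hX 1)
    (integrable_exp_mul_of_map_eq_gaussianReal hX (-1)) n

theorem sum_range_two_mul_moment_div_factorial_le_of_map_eq_gaussianReal
    (hX : P.map X = gaussianReal μ v) (m : ℕ) :
    ∑ i ∈ range (2 * m), (∫ ω, X ω ^ i ∂P) / i ! ≤ exp (μ + v / 2) := by
  rw [← integral_exp_of_map_eq_gaussianReal hX]
  refine sum_range_two_mul_moment_div_factorial_le_integral_exp
    (integrable_pow_of_map_eq_gaussianReal hX) ?_ m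
  simpa using integrable_exp_mul_of_map_eq_gaussianReal hX 1

end Moments

theorem jensen_gap_exp_gaussian_general
    {Ω : Type*} [MeasurableSpace Ω] (P : Measure Ω) [IsProbabilityMeasure P]
    (k : ℕ) (hk : 0 < k)
    (X Y : Ω → ℝ)
    (hmapX : P.map X = gaussianReal 0 1)
    (hmapY : P.map Y = gaussianReal 1 1) :
    (∑ i ∈ Finset.Icc 1 (2 * k - 1), (∫ ω, X ω ^ i ∂P) / (Nat.factorial i : ℝ)
      ≤ (∫ ω, Real.exp (X ω) ∂P) - 1) ∧
    ((∫ ω, Real.exp (X ω) ∂P) - 1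
      ≤ Real.sqrt (Real.exp 1) *
          ∑ i ∈ Finset.Icc 1 (2 * k - 1),
            ((-1 : ℝ) ^ (i + 1) / (Nat.factorial i : ℝ)) * (∫ ω, Y ω ^ i ∂P)) ∧
    ((∫ ω, Real.exp (X ω) ∂P) - 1 = Real.sqrt (Real.exp 1) - 1) := by
  have hEX : ∫ ω, exp (X ω) ∂P = exp (1 / 2) := by
    simpa using integral_exp_of_map_eq_gaussianReal hmapX
  have hsqrt : √(exp 1) = exp (1 / 2) := (exp_half 1).symm
  have hlower := sum_range_two_mul_moment_div_factorial_le_of_map_eq_gaussianReal hmapX k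
  have hupper := sum_range_two_mul_moment_div_factorial_le_of_map_eq_gaussianReal
    (map_neg_eq_gaussianReal hmapY) k
  rw [Finset.sum_range_eq_add_sum_Icc _ (by omega)] at hlower hupper
  have hneg : ∑ i ∈ Icc 1 (2 * k - 1), (∫ ω, (-Y ω) ^ i ∂P) / i !
      = -∑ i ∈ Icc 1 (2 * k - 1), ((-1 : ℝ) ^ (i + 1) / i !) * ∫ ω, Y ω ^ i ∂P := by
    rw [← sum_neg_distrib]
    refine sum_congr rfl fun i _ ↦ ?_
    simp only [neg_pow (Y _), integral_const_mul]
    ring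
  have hexp : exp (1 / 2) * exp (-1 + 1 / 2) = 1 := by rw [← exp_add]; norm_num
  simp only [pow_zero, integral_const, probReal_univ, smul_eq_mul, mul_one, Nat.factorial_zero,
    Nat.cast_one, div_one, NNReal.coe_one, zero_add, hneg] at hlower hupper
  refine ⟨by linarith, ?_, by rw [hEX, hsqrt]⟩
  rw [hEX, hsqrt]
  linarith [mul_le_mul_of_nonneg_left hupper (exp_pos (1 / 2)).le]

/-- Let `X` be a random variable with the standard Gaussian distribution
`N(0,1)`, let `f(x) = exp(x)`, and let `k ≥ 1`. Then
`∑_{i=1}^{2k−1} E[X^i]/i! ≤ E[exp(X)] − 1 ≤ √e·∑_{i=1}^{2k−1} ((−1)^{i+1}/i!)·E[Y^i]`,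
where `Y ~ N(1,1)`, and moreover `E[exp(X)] − 1 = √e − 1`. -/
theorem jensen_gap_exp_gaussian
    {Ω : Type*} [MeasurableSpace Ω] (P : Measure Ω) [IsProbabilityMeasure P]
    (k : ℕ) (hk : 0 < k)
    (X Y : Ω → ℝ) (hX : Measurable X) (hY : Measurable Y)
    (hmapX : P.map X = gaussianReal 0 1)
    (hmapY : P.map Y = gaussianReal 1 1) :
    (∑ i ∈ Finset.Icc 1 (2 * k - 1), (∫ ω, X ω ^ i ∂P) / (Nat.factorial i : ℝ)
      ≤ (∫ ω, Real.exp (X ω) ∂P) - 1) ∧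
    ((∫ ω, Real.exp (X ω) ∂P) - 1
      ≤ Real.sqrt (Real.exp 1) *
          ∑ i ∈ Finset.Icc 1 (2 * k - 1),
            ((-1 : ℝ) ^ (i + 1) / (Nat.factorial i : ℝ)) * (∫ ω, Y ω ^ i ∂P)) ∧
    ((∫ ω, Real.exp (X ω) ∂P) - 1 = Real.sqrt (Real.exp 1) - 1) :=
  jensen_gap_exp_gaussian_general P k hk X Y hmapX hmapY
end
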